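/- arXiv:1809.05251 — 6 statements merged into one kernel-verified Lean document; each statement's English description precedes it below -/
import Mathlib

section
/- If Φ(z) = c₀ + c₁z + c₂z² + ⋯ is analytic on the open unit disk 𝔻 with |Φ(z)| ≤ 1 for all z ∈ 𝔻, then |cₙ| ≤ 1 - |c₀|² for every n ≥ 1. -/
/-!
Averaging `Φ` over the rotations `z ↦ ζᵏ z` by the `n`-th roots of unity keeps exactly the
coefficients `c (m * n)`, so `g w = ∑ c (m * n) wᵐ` is again bounded by `1` on the disk, with
`g 0 = c 0` and `g' 0 = c n`. Composing `g` with the Blaschke factor that sends `g 0` to `0` and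
applying the Schwarz lemma gives `‖g' 0‖ ≤ 1 - ‖g 0‖²` (Schwarz–Pick at the origin); if
`‖g 0‖ = 1`, the maximum modulus principle makes `g` constant instead.
-/

open Complex Metric ComplexConjugate

noncomputable def blaschkeFactor (a w : ℂ) : ℂ := (w - a) / (1 - conj a * w)

theorem one_sub_conj_mul_ne_zero {a w : ℂ} (ha : ‖a‖ < 1) (hw : ‖w‖ ≤ 1) :
    1 - conj a * w ≠ 0 := by
  refine sub_ne_zero.mpr fun h => ?_
  have : ‖conj a * w‖ < 1 := by
    rw [norm_mul, RCLike.norm_conj]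
    nlinarith [norm_nonneg a, norm_nonneg w]
  simp [← h] at this

theorem normSq_one_sub_conj_mul_sub_normSq_sub (a w : ℂ) :
    normSq (1 - conj a * w) - normSq (w - a) = (1 - normSq a) * (1 - normSq w) := by
  simp only [normSq_apply, sub_re, sub_im, mul_re, mul_im, conj_re, conj_im, one_re, one_im]
  ring

theorem norm_blaschkeFactor_le_one {a w : ℂ} (ha : ‖a‖ < 1) (hw : ‖w‖ ≤ 1) :
    ‖blaschkeFactor a w‖ ≤ 1 := by
  rw [blaschkeFactor, norm_div, div_le_one (norm_pos_iff.mpr (one_sub_conj_mul_ne_zero ha hw))]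
  have h := normSq_one_sub_conj_mul_sub_normSq_sub a w
  simp only [normSq_eq_norm_sq] at h
  have ha' : 0 ≤ 1 - ‖a‖ ^ 2 := by nlinarith [norm_nonneg a]
  have hw' : 0 ≤ 1 - ‖w‖ ^ 2 := by nlinarith [norm_nonneg w]
  refine (pow_le_pow_iff_left₀ (norm_nonneg _) (norm_nonneg _) two_ne_zero).mp ?_
  nlinarith [mul_nonneg ha' hw']

theorem differentiableAt_blaschkeFactor {a w : ℂ} (ha : ‖a‖ < 1) (hw : ‖w‖ ≤ 1) :
    DifferentiableAt ℂ (blaschkeFactor a) w :=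
  (differentiableAt_id.sub_const a).div ((differentiableAt_id.const_mul _).const_sub 1)
    (one_sub_conj_mul_ne_zero ha hw)

theorem hasDerivAt_blaschkeFactor_self {a : ℂ} (ha : ‖a‖ < 1) :
    HasDerivAt (blaschkeFactor a) (1 - ‖a‖ ^ 2 : ℂ)⁻¹ a := by
  have hne := one_sub_conj_mul_ne_zero ha ha.le
  have h : HasDerivAt (blaschkeFactor a)
      ((1 * (1 - conj a * a) - (a - a) * -(conj a * 1)) / (1 - conj a * a) ^ 2) a :=
    ((hasDerivAt_id a).sub_const a).div (((hasDerivAt_id a).const_mul (conj a)).const_sub 1) hne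
  rw [conj_mul'] at h hne
  convert h using 1
  field_simp
  ring

theorem deriv_zero_eq_zero_of_norm_eq_one {f : ℂ → ℂ} (hd : DifferentiableOn ℂ f (ball 0 1))
    (hf : Set.MapsTo f (ball 0 1) (closedBall 0 1)) (h0 : ‖f 0‖ = 1) : deriv f 0 = 0 := by
  have hmax : IsMaxOn (norm ∘ f) (ball 0 1) 0 := fun z hz => by
    simpa [h0] using hf hz
  have hconst := Complex.eqOn_of_isPreconnected_of_isMaxOn_norm (convex_ball 0 1).isPreconnected
    isOpen_ball hd (mem_ball_self one_pos) hmax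
  rw [(hconst.eventuallyEq_of_mem (ball_mem_nhds 0 one_pos)).deriv_eq]
  exact deriv_const 0 (f 0)

theorem norm_deriv_zero_le_one_sub_sq {f : ℂ → ℂ} (hd : DifferentiableOn ℂ f (ball 0 1))
    (hf : Set.MapsTo f (ball 0 1) (closedBall 0 1)) : ‖deriv f 0‖ ≤ 1 - ‖f 0‖ ^ 2 := by
  have hf0 : ‖f 0‖ ≤ 1 := by simpa using hf (mem_ball_self one_pos)
  rcases hf0.eq_or_lt with h0 | h0
  · simp [deriv_zero_eq_zero_of_norm_eq_one hd hf h0, h0]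
  set g := blaschkeFactor (f 0) ∘ f
  have hg : DifferentiableOn ℂ g (ball 0 1) := fun z hz =>
    ((differentiableAt_blaschkeFactor h0 (by simpa using hf hz)).comp z
      (hd.differentiableAt (isOpen_ball.mem_nhds hz))).differentiableWithinAt
  have hg_maps : Set.MapsTo g (ball 0 1) (closedBall (g 0) 1) := fun z hz => by
    simpa [g, blaschkeFactor] using norm_blaschkeFactor_le_one h0 (by simpa using hf hz)
  have hg' : deriv g 0 = (1 - ‖f 0‖ ^ 2 : ℂ)⁻¹ * deriv f 0 :=
    ((hasDerivAt_blaschkeFactor_self h0).comp 0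
      (hd.differentiableAt (ball_mem_nhds 0 one_pos)).hasDerivAt).deriv
  have hpos : 0 < 1 - ‖f 0‖ ^ 2 := by nlinarith [norm_nonneg (f 0)]
  have hschwarz := Complex.norm_deriv_le_one_of_mapsTo_ball hg hg_maps one_pos
  rw [hg', norm_mul, norm_inv] at hschwarz
  norm_cast at hschwarz
  rwa [Real.norm_of_nonneg hpos.le, inv_mul_le_iff₀ hpos, mul_one] at hschwarz

theorem eball_zero_one_eq_ball : eball (0 : ℂ) 1 = ball 0 1 := by
  simpa using Metric.eball_coe (x := (0 : ℂ)) (ε := 1)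

theorem hasFPowerSeriesOnBall_ofScalars_of_hasSum {f : ℂ → ℂ} {c : ℕ → ℂ}
    (hf : ∀ z ∈ ball (0 : ℂ) 1, HasSum (fun n => c n * z ^ n) (f z)) :
    HasFPowerSeriesOnBall f (.ofScalars ℂ c) 0 1 where
  r_le := by
    refine ENNReal.le_of_forall_nnreal_lt fun r hr => ?_
    refine FormalMultilinearSeries.le_radius_of_summable _ ?_
    simpa [norm_mul] using (hf r (by simpa using hr)).summable.norm
  r_pos := one_pos
  hasSum {y} hy := by
    rw [eball_zero_one_eq_ball] at hy
    simpa [FormalMultilinearSeries.ofScalars_apply_eq, mul_comm] using hf y hy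

theorem norm_coeff_one_le_one_sub_sq {f : ℂ → ℂ} {c : ℕ → ℂ}
    (hf : ∀ z ∈ ball (0 : ℂ) 1, HasSum (fun n => c n * z ^ n) (f z))
    (hb : ∀ z ∈ ball (0 : ℂ) 1, ‖f z‖ ≤ 1) :
    ‖c 1‖ ≤ 1 - ‖c 0‖ ^ 2 := by
  have H := hasFPowerSeriesOnBall_ofScalars_of_hasSum hf
  have hd : DifferentiableOn ℂ f (ball 0 1) := by
    simpa [eball_zero_one_eq_ball] using H.differentiableOn
  have h0 : f 0 = c 0 := by simpa using (H.coeff_zero fun _ => 0).symm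
  have h1 : deriv f 0 = c 1 := by simpa using H.hasFPowerSeriesAt.deriv
  simpa [h0, h1] using norm_deriv_zero_le_one_sub_sq hd fun z hz => by simpa using hb z hz

theorem IsPrimitiveRoot.sum_range_pow_pow {K : Type*} [Field K] {ζ : K} {n : ℕ}
    (hζ : IsPrimitiveRoot ζ n) (j : ℕ) :
    ∑ k ∈ Finset.range n, (ζ ^ k) ^ j = if n ∣ j then (n : K) else 0 := by
  simp_rw [← pow_mul, mul_comm _ j, pow_mul]
  split_ifs with h
  · simp [(hζ.pow_eq_one_iff_dvd j).mpr h]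
  · have hne : ζ ^ j ≠ 1 := fun h' => h ((hζ.pow_eq_one_iff_dvd j).mp h')
    rw [geom_sum_eq hne, ← pow_mul, mul_comm, pow_mul, hζ.pow_eq_one, one_pow, sub_self, zero_div]

theorem hasSum_coeff_mul_pow_mul_of_hasSum {f : ℂ → ℂ} {c : ℕ → ℂ} {ζ z : ℂ} {n : ℕ}
    (hζ : IsPrimitiveRoot ζ n) (hn : 0 < n)
    (hf : ∀ k, HasSum (fun j => c j * (ζ ^ k * z) ^ j) (f (ζ ^ k * z))) :
    HasSum (fun m => c (m * n) * (z ^ n) ^ m)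
      ((n : ℂ)⁻¹ * ∑ k ∈ Finset.range n, f (ζ ^ k * z)) := by
  have hn' : (n : ℂ) ≠ 0 := Nat.cast_ne_zero.mpr hn.ne'
  have hsum := (hasSum_sum (s := Finset.range n) fun k _ => hf k).mul_left (n : ℂ)⁻¹
  have hterm : ∀ j, (n : ℂ)⁻¹ * ∑ k ∈ Finset.range n, c j * (ζ ^ k * z) ^ j
      = if n ∣ j then c j * z ^ j else 0 := by
    intro j
    simp_rw [mul_pow, ← Finset.mul_sum, ← Finset.sum_mul, hζ.sum_range_pow_pow]
    split_ifs
    · field_simp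
    · simp
  simp_rw [hterm] at hsum
  have hsieve : ∀ j ∉ Set.range (· * n), (if n ∣ j then c j * z ^ j else 0) = 0 := by
    rintro j hj
    rw [if_neg]
    rintro ⟨m, rfl⟩
    exact hj ⟨m, mul_comm _ _⟩
  convert ((mul_left_injective₀ hn.ne').hasSum_iff hsieve).mpr hsum using 1
  funext m
  simp [← pow_mul, mul_comm n]

theorem exists_hasSum_coeff_mul_pow_mul {f : ℂ → ℂ} {c : ℕ → ℂ} {n : ℕ} (hn : 0 < n)
    (hf : ∀ z ∈ ball (0 : ℂ) 1, HasSum (fun j => c j * z ^ j) (f z))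
    (hb : ∀ z ∈ ball (0 : ℂ) 1, ‖f z‖ ≤ 1) :
    ∃ g : ℂ → ℂ, (∀ w ∈ ball (0 : ℂ) 1, HasSum (fun m => c (m * n) * w ^ m) (g w)) ∧
      ∀ w ∈ ball (0 : ℂ) 1, ‖g w‖ ≤ 1 := by
  obtain ⟨ζ, hζ⟩ : ∃ ζ : ℂ, IsPrimitiveRoot ζ n := ⟨_, Complex.isPrimitiveRoot_exp n hn.ne'⟩
  have hrot : ∀ z ∈ ball (0 : ℂ) 1, ∀ k : ℕ, ζ ^ k * z ∈ ball (0 : ℂ) 1 := fun z hz k => by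
    simpa [norm_mul, norm_pow, hζ.norm'_eq_one hn.ne'] using hz
  have key : ∀ w ∈ ball (0 : ℂ) 1,
      ∃ a, HasSum (fun m => c (m * n) * w ^ m) a ∧ ‖a‖ ≤ 1 := fun w hw => by
    obtain ⟨z, rfl⟩ := IsAlgClosed.exists_pow_nat_eq w hn
    have hz : z ∈ ball (0 : ℂ) 1 := by
      rw [mem_ball_zero_iff, norm_pow] at hw
      simpa using (pow_lt_one_iff_of_nonneg (norm_nonneg z) hn.ne').mp hw
    refine ⟨_, hasSum_coeff_mul_pow_mul_of_hasSum hζ hn fun k => hf _ (hrot z hz k), ?_⟩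
    rw [norm_mul, norm_inv, Complex.norm_natCast]
    calc (n : ℝ)⁻¹ * ‖∑ k ∈ Finset.range n, f (ζ ^ k * z)‖
        ≤ (n : ℝ)⁻¹ * ∑ k ∈ Finset.range n, (1 : ℝ) := by
          gcongr
          exact (norm_sum_le _ _).trans (Finset.sum_le_sum fun k _ => hb _ (hrot z hz k))
      _ = 1 := by simp [hn.ne']
  choose! g hg using key
  exact ⟨g, fun w hw => (hg w hw).1, fun w hw => (hg w hw).2⟩

theorem coeff_bound_of_bounded_analytic
    (Φ : ℂ → ℂ) (c : ℕ → ℂ)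
    (hΦ : ∀ z ∈ ball (0 : ℂ) 1, HasSum (fun n : ℕ => c n * z ^ n) (Φ z))
    (hb : ∀ z ∈ ball (0 : ℂ) 1, ‖Φ z‖ ≤ 1) :
    ∀ n : ℕ, 1 ≤ n → ‖c n‖ ≤ 1 - ‖c 0‖ ^ 2 := by
  intro n hn
  obtain ⟨g, hg, hgb⟩ := exists_hasSum_coeff_mul_pow_mul hn hΦ hb
  simpa using norm_coeff_one_le_one_sub_sq hg hgb
end

section
/- Let h ∈ S^δ[α] with δ ≥ 0 and 0 ≤ α < 1, i.e., h(z) = z + Σ_{n≥2} aₙ zⁿ with Σ_{n≥2} n^δ ((n-α)/(1-α)) |aₙ| ≤ 1. Then for z = re^{iθ} ∈ 𝔻: 1 - (1-α)r/((2-α)2^{δ-1}) ≤ |h'(z)| ≤ 1 + (1-α)r/((2-α)2^{δ-1}). -/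
/-!
Differentiating the power series termwise, `h' z - 1 = ∑_{n ≥ 2} n aₙ z^{n-1}`, whose norm is at
most `‖z‖ ∑_{n ≥ 2} n ‖aₙ‖`. Since `n^δ ≥ 2^δ` and `n - α ≥ n (2 - α) / 2` for `n ≥ 2`, each
`n` is at most `(1 - α) / ((2 - α) 2^{δ-1})` times the weight `n^δ (n - α) / (1 - α)`, so the
coefficient condition bounds `∑_{n ≥ 2} n ‖aₙ‖` by that constant.
-/

open Complex Metric

section CoefficientWeight

variable {α δ : ℝ}

lemma mul_two_rpow_le_rpow_mul (hα0 : 0 ≤ α) (hα2 : α ≤ 2) (hδ : 0 ≤ δ) {m : ℝ} (hm : 2 ≤ m) :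
    m * ((2 - α) * 2 ^ (δ - 1)) ≤ m ^ δ * (m - α) := by
  have hpos : (0 : ℝ) < 2 ^ (δ - 1) := Real.rpow_pos_of_pos two_pos _
  have hsplit : (2 : ℝ) ^ δ = 2 * 2 ^ (δ - 1) := by
    rw [Real.rpow_sub_one two_ne_zero]; ring
  calc m * ((2 - α) * 2 ^ (δ - 1)) ≤ 2 * 2 ^ (δ - 1) * (m - α) := by
        nlinarith [mul_nonneg hα0 (sub_nonneg.2 hm)]
    _ ≤ m ^ δ * (m - α) := by
        rw [← hsplit]
        gcongr
        linarith

lemma le_mul_coeff_weight (hα0 : 0 ≤ α) (hα1 : α < 1) (hδ : 0 ≤ δ) {m : ℝ} (hm : 2 ≤ m) :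
    m ≤ (1 - α) / ((2 - α) * 2 ^ (δ - 1)) * (m ^ δ * ((m - α) / (1 - α))) := by
  have hpos : (0 : ℝ) < (2 - α) * 2 ^ (δ - 1) :=
    mul_pos (by linarith) (Real.rpow_pos_of_pos two_pos _)
  have hα : 1 - α ≠ 0 := by linarith
  rw [show (1 - α) / ((2 - α) * 2 ^ (δ - 1)) * (m ^ δ * ((m - α) / (1 - α)))
      = m ^ δ * (m - α) / ((2 - α) * 2 ^ (δ - 1)) by field_simp, le_div_iff₀ hpos]
  exact mul_two_rpow_le_rpow_mul hα0 (by linarith) hδ hm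

lemma summable_and_tsum_le_of_coeff_weight (hα0 : 0 ≤ α) (hα1 : α < 1) (hδ : 0 ≤ δ)
    {a : ℕ → ℂ}
    (hsb : Summable fun n : ℕ =>
      ((n : ℝ) + 2) ^ δ * (((n : ℝ) + 2 - α) / (1 - α)) * ‖a (n + 2)‖)
    (hcoef : ∑' n : ℕ,
      ((n : ℝ) + 2) ^ δ * (((n : ℝ) + 2 - α) / (1 - α)) * ‖a (n + 2)‖ ≤ 1) :
    Summable (fun n : ℕ => ((n : ℝ) + 2) * ‖a (n + 2)‖) ∧
      ∑' n : ℕ, ((n : ℝ) + 2) * ‖a (n + 2)‖ ≤ (1 - α) / ((2 - α) * 2 ^ (δ - 1)) := by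
  set C := (1 - α) / ((2 - α) * 2 ^ (δ - 1))
  have hC : 0 ≤ C := div_nonneg (by linarith)
    (mul_nonneg (by linarith) (Real.rpow_pos_of_pos two_pos _).le)
  have hterm : ∀ n : ℕ, ((n : ℝ) + 2) * ‖a (n + 2)‖ ≤
      C * (((n : ℝ) + 2) ^ δ * (((n : ℝ) + 2 - α) / (1 - α)) * ‖a (n + 2)‖) := fun n => by
    rw [← mul_assoc]
    gcongr
    exact le_mul_coeff_weight hα0 hα1 hδ (by linarith [n.cast_nonneg (α := ℝ)])
  have hs : Summable fun n : ℕ => ((n : ℝ) + 2) * ‖a (n + 2)‖ :=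
    (hsb.mul_left C).of_nonneg_of_le (fun n => by positivity) hterm
  refine ⟨hs, ?_⟩
  calc ∑' n : ℕ, ((n : ℝ) + 2) * ‖a (n + 2)‖
      ≤ ∑' n : ℕ, C * (((n : ℝ) + 2) ^ δ * (((n : ℝ) + 2 - α) / (1 - α)) * ‖a (n + 2)‖) :=
        hs.tsum_le_tsum hterm (hsb.mul_left C)
    _ ≤ C := by rw [tsum_mul_left]; exact mul_le_of_le_one_right hC hcoef

end CoefficientWeight

section PowerSeries

variable {h : ℂ → ℂ} {a : ℕ → ℂ}

lemma hasSum_deriv_of_hasSum_pow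
    (hrep : ∀ z ∈ ball (0 : ℂ) 1, HasSum (fun n : ℕ => a n * z ^ n) (h z))
    (hu : Summable fun n : ℕ => (n : ℝ) * ‖a n‖) {z : ℂ} (hz : z ∈ ball (0 : ℂ) 1) :
    HasSum (fun n : ℕ => a n * (n * z ^ (n - 1))) (deriv h z) := by
  have hbound : ∀ (n : ℕ), ∀ y ∈ ball (0 : ℂ) 1, ‖a n * (n * y ^ (n - 1))‖ ≤ n * ‖a n‖ := by
    intro n y hy
    have hy1 : ‖y‖ ^ (n - 1) ≤ 1 := pow_le_one₀ (norm_nonneg _) (mem_ball_zero_iff.1 hy).le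
    rw [norm_mul, norm_mul, norm_pow, Complex.norm_natCast]
    calc ‖a n‖ * (n * ‖y‖ ^ (n - 1)) ≤ ‖a n‖ * (n * 1) := by gcongr
      _ = n * ‖a n‖ := by ring
  have hD : HasDerivAt (fun w => ∑' n : ℕ, a n * w ^ n) (∑' n : ℕ, a n * (n * z ^ (n - 1))) z :=
    hasDerivAt_tsum_of_isPreconnected hu isOpen_ball (convex_ball (0 : ℂ) 1).isPreconnected
      (fun n y _ => (hasDerivAt_pow n y).const_mul (a n)) hbound (mem_ball_self one_pos)
      (hrep 0 (mem_ball_self one_pos)).summable hz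
  have heq : h =ᶠ[nhds z] fun w => ∑' n : ℕ, a n * w ^ n :=
    Filter.eventually_of_mem (isOpen_ball.mem_nhds hz) fun w hw => (hrep w hw).tsum_eq.symm
  rw [heq.deriv_eq, hD.deriv]
  exact (Summable.of_norm_bounded hu fun n => hbound n z hz).hasSum

lemma norm_deriv_sub_coeff_one_le
    (hrep : ∀ z ∈ ball (0 : ℂ) 1, HasSum (fun n : ℕ => a n * z ^ n) (h z))
    (hs : Summable fun n : ℕ => ((n : ℝ) + 2) * ‖a (n + 2)‖) {z : ℂ} (hz : z ∈ ball (0 : ℂ) 1) :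
    ‖deriv h z - a 1‖ ≤ ‖z‖ * ∑' n : ℕ, ((n : ℝ) + 2) * ‖a (n + 2)‖ := by
  have hu : Summable fun n : ℕ => (n : ℝ) * ‖a n‖ :=
    (summable_nat_add_iff 2).1 (by exact_mod_cast hs)
  have htail := (hasSum_nat_add_iff' 2).2 (hasSum_deriv_of_hasSum_pow hrep hu hz)
  simp only [Finset.sum_range_succ, Finset.sum_range_zero, Nat.cast_zero, Nat.cast_one,
    zero_mul, mul_zero, zero_add, Nat.sub_self, pow_zero, mul_one] at htail
  rw [← tsum_mul_left]
  refine htail.norm_le_of_bounded (hs.mul_left ‖z‖).hasSum fun n => ?_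
  have hz1 : ‖z‖ ^ (n + 1) ≤ ‖z‖ :=
    pow_le_of_le_one (norm_nonneg _) (mem_ball_zero_iff.1 hz).le n.succ_ne_zero
  rw [norm_mul, norm_mul, norm_pow, Complex.norm_natCast, show n + 2 - 1 = n + 1 from rfl]
  push_cast
  calc ‖a (n + 2)‖ * ((n + 2) * ‖z‖ ^ (n + 1)) ≤ ‖a (n + 2)‖ * ((n + 2) * ‖z‖) := by gcongr
    _ = ‖z‖ * ((n + 2) * ‖a (n + 2)‖) := by ring

end PowerSeries

theorem deriv_distortion_general
    (α δ : ℝ) (hα0 : 0 ≤ α) (hα1 : α < 1) (hδ : 0 ≤ δ)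
    (h : ℂ → ℂ) (a : ℕ → ℂ) (ha1 : a 1 = 1)
    (hrep : ∀ z ∈ ball (0 : ℂ) 1, HasSum (fun n : ℕ => a n * z ^ n) (h z))
    (hsb : Summable fun n : ℕ =>
      ((n : ℝ) + 2) ^ δ * (((n : ℝ) + 2 - α) / (1 - α)) * ‖a (n + 2)‖)
    (hcoef : ∑' n : ℕ,
      ((n : ℝ) + 2) ^ δ * (((n : ℝ) + 2 - α) / (1 - α)) * ‖a (n + 2)‖ ≤ 1) :
    ∀ z ∈ ball (0 : ℂ) 1,
      1 - (1 - α) * ‖z‖ / ((2 - α) * (2 : ℝ) ^ (δ - 1)) ≤ ‖deriv h z‖ ∧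
      ‖deriv h z‖ ≤ 1 + (1 - α) * ‖z‖ / ((2 - α) * (2 : ℝ) ^ (δ - 1)) := by
  intro z hz
  obtain ⟨hs, hsum⟩ := summable_and_tsum_le_of_coeff_weight hα0 hα1 hδ hsb hcoef
  have hdist : |‖deriv h z‖ - 1| ≤ (1 - α) * ‖z‖ / ((2 - α) * (2 : ℝ) ^ (δ - 1)) :=
    calc |‖deriv h z‖ - 1| ≤ ‖deriv h z - a 1‖ := by
          simpa [ha1] using abs_norm_sub_norm_le (deriv h z) 1
      _ ≤ ‖z‖ * ∑' n : ℕ, ((n : ℝ) + 2) * ‖a (n + 2)‖ := norm_deriv_sub_coeff_one_le hrep hs hz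
      _ ≤ ‖z‖ * ((1 - α) / ((2 - α) * 2 ^ (δ - 1))) := by gcongr
      _ = (1 - α) * ‖z‖ / ((2 - α) * (2 : ℝ) ^ (δ - 1)) := by ring
  constructor <;> linarith [abs_le.1 hdist]

theorem deriv_distortion
    (α δ : ℝ) (hα0 : 0 ≤ α) (hα1 : α < 1) (hδ : 0 ≤ δ)
    (h : ℂ → ℂ) (a : ℕ → ℂ) (ha0 : a 0 = 0) (ha1 : a 1 = 1)
    (hrep : ∀ z ∈ ball (0 : ℂ) 1, HasSum (fun n : ℕ => a n * z ^ n) (h z))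
    (hsb : Summable fun n : ℕ =>
      ((n : ℝ) + 2) ^ δ * (((n : ℝ) + 2 - α) / (1 - α)) * ‖a (n + 2)‖)
    (hcoef : ∑' n : ℕ,
      ((n : ℝ) + 2) ^ δ * (((n : ℝ) + 2 - α) / (1 - α)) * ‖a (n + 2)‖ ≤ 1) :
    ∀ z ∈ ball (0 : ℂ) 1,
      1 - (1 - α) * ‖z‖ / ((2 - α) * (2 : ℝ) ^ (δ - 1)) ≤ ‖deriv h z‖ ∧
      ‖deriv h z‖ ≤ 1 + (1 - α) * ‖z‖ / ((2 - α) * (2 : ℝ) ^ (δ - 1)) :=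
  deriv_distortion_general α δ hα0 hα1 hδ h a ha1 hrep hsb hcoef
end

section
/- Let h ∈ S^δ[α] with δ ≥ 0, 0 ≤ α < 1. Then for all z with |z| = r < 1, |h(z)| ≤ r + r²(1-α)/(2^δ(2-α)). -/
open Complex Metric

theorem growth_of_h
    (α δ : ℝ) (hα0 : 0 ≤ α) (hα1 : α < 1) (hδ : 0 ≤ δ)
    (h : ℂ → ℂ) (a : ℕ → ℂ) (ha0 : a 0 = 0) (ha1 : a 1 = 1)
    (hrep : ∀ z ∈ ball (0 : ℂ) 1, HasSum (fun n : ℕ => a n * z ^ n) (h z))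
    (hsb : Summable fun n : ℕ =>
      ((n : ℝ) + 2) ^ δ * (((n : ℝ) + 2 - α) / (1 - α)) * ‖a (n + 2)‖)
    (hcoef : ∑' n : ℕ,
      ((n : ℝ) + 2) ^ δ * (((n : ℝ) + 2 - α) / (1 - α)) * ‖a (n + 2)‖ ≤ 1) :
    ∀ z ∈ ball (0 : ℂ) 1,
      ‖h z‖ ≤ ‖z‖ + ‖z‖ ^ 2 * (1 - α) / ((2 : ℝ) ^ δ * (2 - α)) := by
  intro z hz
  have hr : ‖z‖ < 1 := by simpa using hz
  have h1α : (0:ℝ) < 1 - α := by linarith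
  have h2α : (0:ℝ) < 2 - α := by linarith
  have h2δ : (0:ℝ) < (2:ℝ) ^ δ := Real.rpow_pos_of_pos (by norm_num) δ
  have hK' : (0:ℝ) < (2:ℝ) ^ δ * (2 - α) := mul_pos h2δ h2α
  set K : ℝ := (1 - α) / ((2:ℝ) ^ δ * (2 - α)) with hKdef
  have hKpos : 0 < K := div_pos h1α hK'
  have hterm : ∀ n : ℕ, ‖a (n + 2) * z ^ (n + 2)‖ ≤
      ‖z‖ ^ 2 * K * (((n : ℝ) + 2) ^ δ * (((n : ℝ) + 2 - α) / (1 - α)) * ‖a (n + 2)‖) := by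
    intro n
    have key : (1:ℝ) ≤ K * (((n : ℝ) + 2) ^ δ * (((n : ℝ) + 2 - α) / (1 - α))) := by
      rw [hKdef, div_mul_eq_mul_div, le_div_iff₀ hK', one_mul]
      have heq : (1 - α) * (((n : ℝ) + 2) ^ δ * (((n : ℝ) + 2 - α) / (1 - α)))
          = ((n : ℝ) + 2) ^ δ * ((n : ℝ) + 2 - α) := by
        field_simp
      rw [heq]
      have h1 : (2:ℝ) ^ δ ≤ ((n : ℝ) + 2) ^ δ :=
        Real.rpow_le_rpow (by norm_num) (by have : (0:ℝ) ≤ (n:ℝ) := Nat.cast_nonneg n; linarith) hδ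
      have h2 : (2:ℝ) - α ≤ (n : ℝ) + 2 - α := by
        have : (0:ℝ) ≤ (n:ℝ) := Nat.cast_nonneg n
        linarith
      exact mul_le_mul h1 h2 h2α.le (by positivity)
    rw [norm_mul, norm_pow]
    calc ‖a (n + 2)‖ * ‖z‖ ^ (n + 2) ≤ ‖a (n + 2)‖ * ‖z‖ ^ 2 := by
          apply mul_le_mul_of_nonneg_left _ (norm_nonneg _)
          exact pow_le_pow_of_le_one (norm_nonneg z) hr.le (by omega)
      _ = ‖z‖ ^ 2 * (1 * ‖a (n + 2)‖) := by ring
      _ ≤ ‖z‖ ^ 2 * (K * (((n : ℝ) + 2) ^ δ * (((n : ℝ) + 2 - α) / (1 - α))) * ‖a (n + 2)‖) := by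
          apply mul_le_mul_of_nonneg_left _ (by positivity)
          exact mul_le_mul_of_nonneg_right key (norm_nonneg _)
      _ = ‖z‖ ^ 2 * K * (((n : ℝ) + 2) ^ δ * (((n : ℝ) + 2 - α) / (1 - α)) * ‖a (n + 2)‖) := by
          ring
  have hsum2 : Summable (fun n : ℕ => ‖a (n + 2) * z ^ (n + 2)‖) :=
    Summable.of_nonneg_of_le (fun n => norm_nonneg _) hterm (hsb.mul_left _)
  have hsumf : Summable (fun n : ℕ => ‖a n * z ^ n‖) :=
    (summable_nat_add_iff 2).mp hsum2
  have htail : ∑' n : ℕ, ‖a (n + 2) * z ^ (n + 2)‖ ≤ ‖z‖ ^ 2 * K := by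
    calc ∑' n : ℕ, ‖a (n + 2) * z ^ (n + 2)‖
        ≤ ∑' n : ℕ, ‖z‖ ^ 2 * K *
            (((n : ℝ) + 2) ^ δ * (((n : ℝ) + 2 - α) / (1 - α)) * ‖a (n + 2)‖) :=
          Summable.tsum_le_tsum hterm hsum2 (hsb.mul_left _)
      _ = ‖z‖ ^ 2 * K * ∑' n : ℕ,
            ((n : ℝ) + 2) ^ δ * (((n : ℝ) + 2 - α) / (1 - α)) * ‖a (n + 2)‖ :=
          tsum_mul_left
      _ ≤ ‖z‖ ^ 2 * K * 1 := by
          apply mul_le_mul_of_nonneg_left hcoef (by positivity)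
      _ = ‖z‖ ^ 2 * K := by ring
  have hsplit : ∑ i ∈ Finset.range 2, ‖a i * z ^ i‖ +
      ∑' n : ℕ, ‖a (n + 2) * z ^ (n + 2)‖ = ∑' n : ℕ, ‖a n * z ^ n‖ :=
    Summable.sum_add_tsum_nat_add 2 hsumf
  have hhead : ∑ i ∈ Finset.range 2, ‖a i * z ^ i‖ = ‖z‖ := by
    simp [Finset.sum_range_succ, ha0, ha1]
  have hnorm : ‖h z‖ ≤ ∑' n : ℕ, ‖a n * z ^ n‖ := by
    rw [(hrep z hz).tsum_eq.symm]
    exact norm_tsum_le_tsum_norm hsumf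
  have : ‖h z‖ ≤ ‖z‖ + ‖z‖ ^ 2 * K := by
    rw [← hsplit, hhead] at hnorm
    linarith [htail]
  calc ‖h z‖ ≤ ‖z‖ + ‖z‖ ^ 2 * K := this
    _ = ‖z‖ + ‖z‖ ^ 2 * (1 - α) / ((2 : ℝ) ^ δ * (2 - α)) := by
        rw [hKdef, mul_div_assoc]
end

section
/- Let f = h + ḡ be a sense-preserving harmonic mapping on 𝔻 with h ∈ S^δ[α] (δ ≥ 0, 0 ≤ α < 1), g(z) = Σ_{n≥1} bₙ zⁿ, dilatation w = g'/h' satisfying |w| < 1, and |b₁| = β. Then for n ≥ 3: |bₙ| ≤ ((1-α)(1-β²)/n) Σ_{k=1}^{n-1} k^{1-δ}/(k-α) + (1-α)β/(n^δ(n-α)). -/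
/-!
Comparing Taylor coefficients in `g' = w h'` gives `n bₙ = Σ_{k=1}^{n} k aₖ c_{n-k}`, where `cⱼ`
are the coefficients of `w`. Here `|c₀| = |b₁| = β`, the class condition bounds each `k |aₖ|`, and
every other coefficient of a self-map of the disc satisfies `|cⱼ| ≤ 1 - |c₀|²`. For the latter,
average `w` over the rotations by the `j`-th roots of unity, which keeps only the coefficients of
index divisible by `j`, and compose with the disc automorphism sending `c₀` to `0`: the result
has `j`-th coefficient `cⱼ / (1 - |c₀|²)`, which is at most `1` by Cauchy's estimate.
-/

open Complex Metric Finset Filter Topology ComplexConjugate Nat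

def HasCoeffsOnDisc (f : ℂ → ℂ) (a : ℕ → ℂ) : Prop :=
  ∀ z ∈ ball (0 : ℂ) 1, HasSum (fun n => a n * z ^ n) (f z)

theorem DifferentiableOn.hasCoeffsOnDisc {f : ℂ → ℂ}
    (hf : DifferentiableOn ℂ f (ball 0 1)) :
    HasCoeffsOnDisc f fun n => (n ! : ℂ)⁻¹ * iteratedDeriv n f 0 := fun z hz =>
  (hasSum_taylorSeries_on_ball hf hz).congr_fun fun n => by
    simp only [smul_eq_mul, sub_zero]; ring

theorem hasCoeffsOnDisc_const (c : ℂ) :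
    HasCoeffsOnDisc (fun _ => c) fun n => if n = 0 then c else 0 := fun z _ =>
  (hasSum_ite_eq 0 c).congr_fun fun n => by split_ifs with hn <;> simp [hn]

namespace HasCoeffsOnDisc

variable {f g : ℂ → ℂ} {a b : ℕ → ℂ}

theorem congr (hf : HasCoeffsOnDisc f a) (hfg : ∀ z ∈ ball (0 : ℂ) 1, f z = g z) :
    HasCoeffsOnDisc g a := fun z hz => hfg z hz ▸ hf z hz

theorem hasFPowerSeriesOnBall (hf : HasCoeffsOnDisc f a) :
    HasFPowerSeriesOnBall f (FormalMultilinearSeries.ofScalars ℂ a) 0 1 where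
  r_le := by
    refine ENNReal.le_of_forall_nnreal_lt fun r hr => ?_
    have hr' : ((r : ℝ) : ℂ) ∈ ball (0 : ℂ) 1 := by simpa using hr
    refine FormalMultilinearSeries.le_radius_of_summable_norm _ ?_
    simpa [FormalMultilinearSeries.ofScalars_norm] using
      summable_norm_iff.mpr (hf _ hr').summable
  r_pos := one_pos
  hasSum {y} hy := by
    rw [← ENNReal.ofReal_one, eball_ofReal] at hy
    simpa [FormalMultilinearSeries.ofScalars_apply_eq, mul_comm] using hf y hy

theorem analyticOnNhd (hf : HasCoeffsOnDisc f a) : AnalyticOnNhd ℂ f (ball 0 1) := fun z hz =>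
  hf.hasFPowerSeriesOnBall.analyticAt_of_mem (by rwa [← ENNReal.ofReal_one, eball_ofReal])

theorem differentiableOn (hf : HasCoeffsOnDisc f a) : DifferentiableOn ℂ f (ball 0 1) :=
  hf.analyticOnNhd.differentiableOn

theorem coeff_unique (hf : HasCoeffsOnDisc f a) (hf' : HasCoeffsOnDisc f b) : a = b :=
  FormalMultilinearSeries.ofScalars_series_injective (𝕜 := ℂ) ℂ <|
    hf.hasFPowerSeriesOnBall.hasFPowerSeriesAt.eq_formalMultilinearSeries
      hf'.hasFPowerSeriesOnBall.hasFPowerSeriesAt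

theorem coeff_eq_iteratedDeriv (hf : HasCoeffsOnDisc f a) :
    a = fun n => (n ! : ℂ)⁻¹ * iteratedDeriv n f 0 :=
  hf.coeff_unique hf.differentiableOn.hasCoeffsOnDisc

theorem apply_zero (hf : HasCoeffsOnDisc f a) : f 0 = a 0 := by
  simpa using (hf 0 (mem_ball_self one_pos)).unique (hasSum_single 0 fun n hn => by simp [hn])

theorem sub (hf : HasCoeffsOnDisc f a) (hg : HasCoeffsOnDisc g b) :
    HasCoeffsOnDisc (fun z => f z - g z) fun n => a n - b n := fun z hz =>
  ((hf z hz).sub (hg z hz)).congr_fun fun _ => sub_mul _ _ _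

theorem const_mul (hf : HasCoeffsOnDisc f a) (c : ℂ) :
    HasCoeffsOnDisc (fun z => c * f z) fun n => c * a n := fun z hz =>
  ((hf z hz).mul_left c).congr_fun fun _ => mul_assoc _ _ _

theorem sum {ι : Type*} {s : Finset ι} {F : ι → ℂ → ℂ} {A : ι → ℕ → ℂ}
    (hF : ∀ i ∈ s, HasCoeffsOnDisc (F i) (A i)) :
    HasCoeffsOnDisc (fun z => ∑ i ∈ s, F i z) fun n => ∑ i ∈ s, A i n := fun z hz =>
  (hasSum_sum fun i hi => hF i hi z hz).congr_fun fun _ => Finset.sum_mul ..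

theorem comp_mul (hf : HasCoeffsOnDisc f a) {u : ℂ} (hu : ‖u‖ ≤ 1) :
    HasCoeffsOnDisc (fun z => f (u * z)) fun n => a n * u ^ n := fun z hz => by
  have huz : u * z ∈ ball (0 : ℂ) 1 := by
    rw [mem_ball_zero_iff] at hz ⊢
    rw [norm_mul]
    nlinarith [norm_nonneg u, norm_nonneg z]
  exact (hf _ huz).congr_fun fun n => by ring

theorem mul (hf : HasCoeffsOnDisc f a) (hg : HasCoeffsOnDisc g b) :
    HasCoeffsOnDisc (fun z => f z * g z) fun n => ∑ k ∈ range (n + 1), a k * b (n - k) := by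
  intro z hz
  have H := hasSum_sum_range_mul_of_summable_norm (f := fun n => a n * z ^ n)
    (g := fun n => b n * z ^ n) (summable_norm_iff.mpr (hf z hz).summable)
    (summable_norm_iff.mpr (hg z hz).summable)
  rw [(hf z hz).tsum_eq, (hg z hz).tsum_eq] at H
  refine H.congr_fun fun n => ?_
  rw [Finset.sum_mul]
  refine Finset.sum_congr rfl fun k hk => ?_
  rw [← Nat.add_sub_cancel' (Nat.lt_succ_iff.mp (Finset.mem_range.mp hk)), pow_add,
    Nat.add_sub_cancel_left]
  ring

theorem deriv (hf : HasCoeffsOnDisc f a) :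
    HasCoeffsOnDisc (deriv f) fun n => (n + 1) * a (n + 1) := by
  convert hf.analyticOnNhd.deriv.differentiableOn.hasCoeffsOnDisc using 2 with n
  simp only [hf.coeff_eq_iteratedDeriv, ← iteratedDeriv_succ', factorial_succ]
  push_cast
  field_simp

theorem norm_coeff_le_one (hf : HasCoeffsOnDisc f a)
    (hbd : ∀ z ∈ ball (0 : ℂ) 1, ‖f z‖ ≤ 1) (n : ℕ) : ‖a n‖ ≤ 1 := by
  have hR : ∀ R ∈ Set.Ioo (0 : ℝ) 1, ‖a n‖ * R ^ n ≤ 1 := by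
    rintro R ⟨hR0, hR1⟩
    have hsub : closedBall (0 : ℂ) R ⊆ ball 0 1 := closedBall_subset_ball hR1
    have hcauchy := norm_iteratedDeriv_le_of_forall_mem_sphere_norm_le n hR0
      (hf.differentiableOn.diffContOnCl_ball hsub)
      fun z hz => hbd z (hsub (sphere_subset_closedBall hz))
    rw [hf.coeff_eq_iteratedDeriv, norm_mul, norm_inv, norm_natCast]
    rw [le_div_iff₀ (by positivity)] at hcauchy
    have := factorial_pos n
    field_simp
    linarith
  have hlim : Tendsto (fun R : ℝ => ‖a n‖ * R ^ n) (𝓝[<] 1) (𝓝 (‖a n‖ * 1 ^ n)) :=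
    ((continuous_const.mul (continuous_pow n)).tendsto 1).mono_left nhdsWithin_le_nhds
  rw [one_pow, mul_one] at hlim
  exact le_of_tendsto hlim (eventually_of_mem (Ioo_mem_nhdsLT zero_lt_one) hR)

end HasCoeffsOnDisc

theorem one_sub_conj_mul_ne_zero_s9 {u v : ℂ} (hu : ‖u‖ < 1) (hv : ‖v‖ < 1) :
    1 - conj v * u ≠ 0 := by
  have hlt : ‖conj v * u‖ < 1 := by
    rw [norm_mul, RCLike.norm_conj]
    nlinarith [norm_nonneg u, norm_nonneg v]
  intro h
  rw [← sub_eq_zero.mp h, norm_one] at hlt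
  exact hlt.false

theorem norm_sub_div_one_sub_conj_mul_lt_one {u v : ℂ} (hu : ‖u‖ < 1) (hv : ‖v‖ < 1) :
    ‖(u - v) / (1 - conj v * u)‖ < 1 := by
  rw [norm_div, div_lt_one (norm_pos_iff.mpr (one_sub_conj_mul_ne_zero_s9 hu hv)),
    ← pow_lt_pow_iff_left₀ (norm_nonneg _) (norm_nonneg _) two_ne_zero]
  have hu' : normSq u < 1 := by rw [normSq_eq_norm_sq]; nlinarith [norm_nonneg u]
  have hv' : normSq v < 1 := by rw [normSq_eq_norm_sq]; nlinarith [norm_nonneg v]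
  have key : normSq (1 - conj v * u) - normSq (u - v) = (1 - normSq u) * (1 - normSq v) := by
    simp only [normSq_apply, sub_re, sub_im, mul_re, mul_im, conj_re, conj_im, one_re, one_im]
    ring
  rw [← normSq_eq_norm_sq, ← normSq_eq_norm_sq]
  nlinarith

theorem IsPrimitiveRoot.geom_sum_pow_eq {R : Type*} [CommRing R] [IsDomain R] {ζ : R} {m : ℕ}
    (hζ : IsPrimitiveRoot ζ m) (n : ℕ) :
    ∑ j ∈ range m, (ζ ^ n) ^ j = if m ∣ n then (m : R) else 0 := by
  split_ifs with hmn
  · simp [(hζ.pow_eq_one_iff_dvd n).mpr hmn]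
  · have hne : ζ ^ n - 1 ≠ 0 := sub_ne_zero.mpr fun h => hmn ((hζ.pow_eq_one_iff_dvd n).mp h)
    have hgeom := geom_sum_mul (ζ ^ n) m
    rw [← pow_mul, pow_mul', hζ.pow_eq_one, one_pow, sub_self] at hgeom
    exact (mul_eq_zero.mp hgeom).resolve_right hne

theorem cauchyProduct_leading_coeff {R : Type*} [Ring R] [NoZeroDivisors R] {a b c : ℕ → R}
    {m : ℕ} (hb : b 0 ≠ 0) (habc : ∀ n, ∑ k ∈ range (n + 1), a k * b (n - k) = c n)
    (hc : ∀ n < m, c n = 0) : a m * b 0 = c m := by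
  have hsum (n : ℕ) (ha : ∀ k < n, a k = 0) : a n * b 0 = c n := by
    rw [← habc n, sum_range_succ, Nat.sub_self,
      sum_eq_zero fun k hk => by rw [ha k (mem_range.mp hk), zero_mul], zero_add]
  refine hsum m fun k hk => ?_
  induction k using Nat.strong_induction_on with
  | _ k ih =>
    have h := hsum k fun j hj => ih j hj (hj.trans hk)
    rw [hc k hk] at h
    exact (mul_eq_zero.mp h).resolve_right hb

noncomputable def rotationAverage (m : ℕ) (ζ : ℂ) (f : ℂ → ℂ) (z : ℂ) : ℂ :=
  (m : ℂ)⁻¹ * ∑ j ∈ range m, f (ζ ^ j * z)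

theorem norm_rotationAverage_lt_one {f : ℂ → ℂ} (hf : ∀ z ∈ ball (0 : ℂ) 1, ‖f z‖ < 1)
    {m : ℕ} (hm : m ≠ 0) {ζ : ℂ} (hζ : ‖ζ‖ ≤ 1) {z : ℂ} (hz : z ∈ ball (0 : ℂ) 1) :
    ‖rotationAverage m ζ f z‖ < 1 := by
  have hmem (j : ℕ) : ζ ^ j * z ∈ ball (0 : ℂ) 1 := by
    rw [mem_ball_zero_iff] at hz ⊢
    rw [norm_mul, norm_pow]
    exact (mul_le_of_le_one_left (norm_nonneg z) (pow_le_one₀ (norm_nonneg ζ) hζ)).trans_lt hz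
  have hsum : ‖∑ j ∈ range m, f (ζ ^ j * z)‖ < m :=
    calc ‖∑ j ∈ range m, f (ζ ^ j * z)‖ ≤ ∑ j ∈ range m, ‖f (ζ ^ j * z)‖ := norm_sum_le _ _
      _ < ∑ _j ∈ range m, (1 : ℝ) :=
        sum_lt_sum_of_nonempty (nonempty_range_iff.mpr hm) fun j _ => hf _ (hmem j)
      _ = m := by simp
  have hm' : (0 : ℝ) < m := by positivity
  rw [rotationAverage, norm_mul, norm_inv, norm_natCast, inv_mul_lt_one₀ hm']
  exact hsum

namespace HasCoeffsOnDisc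

variable {f : ℂ → ℂ} {a : ℕ → ℂ}

theorem rotationAverage (hf : HasCoeffsOnDisc f a) {m : ℕ} {ζ : ℂ} (hζ : IsPrimitiveRoot ζ m)
    (hm : m ≠ 0) :
    HasCoeffsOnDisc (rotationAverage m ζ f) fun n => if m ∣ n then a n else 0 := by
  have hζj (j : ℕ) : ‖ζ ^ j‖ ≤ 1 := by simp [norm_pow, hζ.norm'_eq_one hm]
  unfold _root_.rotationAverage
  convert (HasCoeffsOnDisc.sum (s := range m) fun j _ => hf.comp_mul (hζj j)).const_mul
    (m : ℂ)⁻¹ using 2 with n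
  simp_rw [← pow_mul, mul_comm _ n, pow_mul, ← mul_sum, hζ.geom_sum_pow_eq n]
  have : (m : ℂ) ≠ 0 := by exact_mod_cast hm
  split_ifs <;> simp [field]

theorem norm_coeff_le_one_sub_sq_of_gap (hf : HasCoeffsOnDisc f a)
    (hlt : ∀ z ∈ ball (0 : ℂ) 1, ‖f z‖ < 1) {m : ℕ} (hm : m ≠ 0)
    (hgap : ∀ n, 0 < n → n < m → a n = 0) : ‖a m‖ ≤ 1 - ‖a 0‖ ^ 2 := by
  have ha₀ : ‖a 0‖ < 1 := by simpa [hf.apply_zero] using hlt 0 (mem_ball_self one_pos)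
  have hden (z : ℂ) (hz : z ∈ ball (0 : ℂ) 1) : 1 - conj (a 0) * f z ≠ 0 :=
    one_sub_conj_mul_ne_zero_s9 (hlt z hz) ha₀
  set Ψ : ℂ → ℂ := fun z => (f z - a 0) / (1 - conj (a 0) * f z)
  have hΨ : HasCoeffsOnDisc Ψ fun n => (n ! : ℂ)⁻¹ * iteratedDeriv n Ψ 0 :=
    ((hf.differentiableOn.sub_const _).div
      ((differentiableOn_const 1).sub (hf.differentiableOn.const_mul _)) hden).hasCoeffsOnDisc
  have hΨm : ‖(m ! : ℂ)⁻¹ * iteratedDeriv m Ψ 0‖ ≤ 1 := hΨ.norm_coeff_le_one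
    (fun z hz => (norm_sub_div_one_sub_conj_mul_lt_one (hlt z hz) ha₀).le) m
  have hprod := (hΨ.mul ((hasCoeffsOnDisc_const 1).sub (hf.const_mul (conj (a 0))))).congr
    fun z hz => div_mul_cancel₀ _ (hden z hz)
  -- `Ψ * (1 - conj (a 0) * f) = f - a 0` and `f - a 0` vanishes to order `m` at `0`, so comparing
  -- coefficients gives `Ψ`'s `m`-th coefficient times `1 - ‖a 0‖ ^ 2` equal to `a m`.
  have hlead := cauchyProduct_leading_coeff
    (b := fun n => (if n = 0 then 1 else 0) - conj (a 0) * a n)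
    (c := fun n => a n - if n = 0 then a 0 else 0) (m := m) ?_
    (fun n => congrFun (hprod.coeff_unique (hf.sub (hasCoeffsOnDisc_const (a 0)))) n) ?_
  · simp only [if_true, if_neg hm, sub_zero, conj_mul'] at hlead
    have hnorm : ‖(1 : ℂ) - (‖a 0‖ : ℂ) ^ 2‖ = 1 - ‖a 0‖ ^ 2 := by
      rw [← ofReal_pow, ← ofReal_one, ← ofReal_sub, norm_real,
        Real.norm_of_nonneg (by nlinarith [norm_nonneg (a 0)])]
    rw [← hlead, norm_mul, hnorm]
    exact mul_le_of_le_one_left (by nlinarith [norm_nonneg (a 0)]) hΨm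
  · simpa using one_sub_conj_mul_ne_zero_s9 ha₀ ha₀
  · intro n hn
    rcases n.eq_zero_or_pos with rfl | hpos
    · simp
    · simp [hgap n hpos hn, hpos.ne']

theorem norm_coeff_le_one_sub_sq (hf : HasCoeffsOnDisc f a)
    (hlt : ∀ z ∈ ball (0 : ℂ) 1, ‖f z‖ < 1) {m : ℕ} (hm : m ≠ 0) : ‖a m‖ ≤ 1 - ‖a 0‖ ^ 2 := by
  obtain ⟨ζ, hζ⟩ : ∃ ζ : ℂ, IsPrimitiveRoot ζ m := ⟨_, isPrimitiveRoot_exp m hm⟩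
  simpa using (hf.rotationAverage hζ hm).norm_coeff_le_one_sub_sq_of_gap
    (fun z hz => norm_rotationAverage_lt_one hlt hm (hζ.norm'_eq_one hm).le hz) hm
    fun n hn hnm => if_neg fun hdvd => (Nat.le_of_dvd hn hdvd).not_gt hnm

end HasCoeffsOnDisc

theorem coeff_succ_of_deriv_eq_mul {g h w : ℂ → ℂ} {a b c : ℕ → ℂ}
    (hg : HasCoeffsOnDisc g b) (hh : HasCoeffsOnDisc h a) (hw : HasCoeffsOnDisc w c)
    (hdil : ∀ z ∈ ball (0 : ℂ) 1, deriv g z = w z * deriv h z) (k : ℕ) :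
    ((k : ℂ) + 1) * b (k + 1) = ∑ j ∈ range (k + 1), ((j : ℂ) + 1) * a (j + 1) * c (k - j) :=
  congrFun (hg.deriv.coeff_unique
    ((hh.deriv.mul hw).congr fun z hz => by rw [hdil z hz, mul_comm])) k

theorem norm_sum_range_mul_le {R : Type*} [SeminormedRing R] {d c : ℕ → R} {s : ℝ}
    (hc : ∀ j ≠ 0, ‖c j‖ ≤ s) (k : ℕ) :
    ‖∑ j ∈ range (k + 1), d j * c (k - j)‖ ≤ ‖d k‖ * ‖c 0‖ + s * ∑ j ∈ range k, ‖d j‖ := by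
  rw [sum_range_succ, Nat.sub_self, add_comm, mul_sum]
  refine (norm_add_le _ _).trans (add_le_add (norm_mul_le _ _) ?_)
  refine (norm_sum_le _ _).trans (sum_le_sum fun j hj => ?_)
  have hkj : k - j ≠ 0 := by have := mem_range.mp hj; omega
  calc ‖d j * c (k - j)‖ ≤ ‖d j‖ * s :=
        (norm_mul_le _ _).trans (mul_le_mul_of_nonneg_left (hc _ hkj) (norm_nonneg _))
    _ = s * ‖d j‖ := mul_comm _ _

theorem succ_mul_norm_le_of_eq_sum_mul {a b c : ℕ → ℂ} {s : ℝ}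
    (hcoeff : ∀ k : ℕ,
      ((k : ℂ) + 1) * b (k + 1) = ∑ j ∈ range (k + 1), ((j : ℂ) + 1) * a (j + 1) * c (k - j))
    (hc : ∀ j ≠ 0, ‖c j‖ ≤ s) (k : ℕ) :
    ((k : ℝ) + 1) * ‖b (k + 1)‖ ≤
      ((k : ℝ) + 1) * ‖a (k + 1)‖ * ‖c 0‖ + s * ∑ i ∈ Icc 1 k, (i : ℝ) * ‖a i‖ := by
  have hnorm (j : ℕ) (x : ℂ) : ‖((j : ℂ) + 1) * x‖ = ((j : ℝ) + 1) * ‖x‖ := by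
    rw [norm_mul, ← Nat.cast_add_one, norm_natCast, Nat.cast_add_one]
  have hreindex : ∑ j ∈ range k, ((j : ℝ) + 1) * ‖a (j + 1)‖ = ∑ i ∈ Icc 1 k, (i : ℝ) * ‖a i‖ := by
    rw [← Ico_add_one_right_eq_Icc, sum_Ico_eq_sum_range, Nat.add_sub_cancel]
    simp [add_comm]
  simpa only [← hcoeff k, hnorm, hreindex] using
    norm_sum_range_mul_le (d := fun j => ((j : ℂ) + 1) * a (j + 1)) hc k

section WeightedCoeffBound

variable {α δ : ℝ} {a : ℕ → ℂ}

theorem norm_coeff_le_of_weighted_tsum_le (hα : α < 1) (ha₁ : a 1 = 1)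
    (hsum : Summable fun n : ℕ => ((n : ℝ) + 2) ^ δ * (((n : ℝ) + 2 - α) / (1 - α)) * ‖a (n + 2)‖)
    (hle : ∑' n : ℕ, ((n : ℝ) + 2) ^ δ * (((n : ℝ) + 2 - α) / (1 - α)) * ‖a (n + 2)‖ ≤ 1)
    {k : ℕ} (hk : 1 ≤ k) : ‖a k‖ ≤ (1 - α) / ((k : ℝ) ^ δ * ((k : ℝ) - α)) := by
  have hα' : 0 < 1 - α := sub_pos.mpr hα
  obtain rfl | hk2 := hk.eq_or_lt
  · simp [ha₁, hα'.ne']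
  obtain ⟨i, rfl⟩ : ∃ i, k = i + 2 := ⟨k - 2, by omega⟩
  have hpos (j : ℕ) : 0 < (j : ℝ) + 2 - α := by linarith [(j.cast_nonneg : (0 : ℝ) ≤ j)]
  have hterm := (hsum.le_tsum i fun j _ => by have := hpos j; positivity).trans hle
  push_cast
  rw [le_div_iff₀ (by have := hpos i; positivity)]
  rw [mul_div_assoc', div_mul_eq_mul_div, div_le_one hα'] at hterm
  linarith

theorem natCast_mul_norm_coeff_le (hα : α < 1) (ha₁ : a 1 = 1)
    (hsum : Summable fun n : ℕ => ((n : ℝ) + 2) ^ δ * (((n : ℝ) + 2 - α) / (1 - α)) * ‖a (n + 2)‖)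
    (hle : ∑' n : ℕ, ((n : ℝ) + 2) ^ δ * (((n : ℝ) + 2 - α) / (1 - α)) * ‖a (n + 2)‖ ≤ 1)
    {k : ℕ} (hk : 1 ≤ k) : k * ‖a k‖ ≤ (1 - α) * ((k : ℝ) ^ (1 - δ) / ((k : ℝ) - α)) := by
  have hk' : (0 : ℝ) < k := by exact_mod_cast hk
  calc (k : ℝ) * ‖a k‖ ≤ k * ((1 - α) / ((k : ℝ) ^ δ * ((k : ℝ) - α))) :=
        mul_le_mul_of_nonneg_left (norm_coeff_le_of_weighted_tsum_le hα ha₁ hsum hle hk) hk'.le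
    _ = (1 - α) * ((k : ℝ) ^ (1 - δ) / ((k : ℝ) - α)) := by
        rw [Real.rpow_sub hk', Real.rpow_one]
        field_simp

theorem sum_natCast_mul_norm_coeff_le (hα : α < 1) (ha₁ : a 1 = 1)
    (hsum : Summable fun n : ℕ => ((n : ℝ) + 2) ^ δ * (((n : ℝ) + 2 - α) / (1 - α)) * ‖a (n + 2)‖)
    (hle : ∑' n : ℕ, ((n : ℝ) + 2) ^ δ * (((n : ℝ) + 2 - α) / (1 - α)) * ‖a (n + 2)‖ ≤ 1)
    (k : ℕ) :
    ∑ i ∈ Icc 1 k, (i : ℝ) * ‖a i‖ ≤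
      (1 - α) * ∑ i ∈ Icc 1 k, (i : ℝ) ^ (1 - δ) / ((i : ℝ) - α) := by
  rw [mul_sum]
  exact sum_le_sum fun i hi => natCast_mul_norm_coeff_le hα ha₁ hsum hle (mem_Icc.mp hi).1

end WeightedCoeffBound

theorem bn_bound_general
    (α β δ : ℝ) (hα1 : α < 1)
    (h g w : ℂ → ℂ) (a b : ℕ → ℂ)
    (ha1 : a 1 = 1)
    (hreph : ∀ z ∈ ball (0 : ℂ) 1, HasSum (fun n : ℕ => a n * z ^ n) (h z))
    (hrepg : ∀ z ∈ ball (0 : ℂ) 1, HasSum (fun n : ℕ => b n * z ^ n) (g z))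
    (hsb : Summable fun n : ℕ =>
      ((n : ℝ) + 2) ^ δ * (((n : ℝ) + 2 - α) / (1 - α)) * ‖a (n + 2)‖)
    (hcoef : ∑' n : ℕ,
      ((n : ℝ) + 2) ^ δ * (((n : ℝ) + 2 - α) / (1 - α)) * ‖a (n + 2)‖ ≤ 1)
    (hw : DifferentiableOn ℂ w (ball (0 : ℂ) 1))
    (hwlt : ∀ z ∈ ball (0 : ℂ) 1, ‖w z‖ < 1)
    (hdil : ∀ z ∈ ball (0 : ℂ) 1, deriv g z = w z * deriv h z)
    (hβ : ‖b 1‖ = β) :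
    ∀ n : ℕ, 3 ≤ n →
      ‖b n‖ ≤ (1 - α) * (1 - β ^ 2) / (n : ℝ) *
          (∑ k ∈ Finset.Icc 1 (n - 1), (k : ℝ) ^ (1 - δ) / ((k : ℝ) - α)) +
        (1 - α) * β / ((n : ℝ) ^ δ * ((n : ℝ) - α)) := by
  intro n hn
  obtain ⟨c, hc⟩ : ∃ c, HasCoeffsOnDisc w c := ⟨_, hw.hasCoeffsOnDisc⟩
  have hcoeff := coeff_succ_of_deriv_eq_mul hrepg hreph hc hdil
  have hc₀ : ‖c 0‖ = β := by simpa [ha1, ← hβ] using congrArg norm (hcoeff 0).symm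
  have hcj (j : ℕ) (hj : j ≠ 0) : ‖c j‖ ≤ 1 - β ^ 2 := hc₀ ▸ hc.norm_coeff_le_one_sub_sq hwlt hj
  obtain ⟨k, rfl⟩ : ∃ k, n = k + 1 := ⟨n - 1, by omega⟩
  have hak := norm_coeff_le_of_weighted_tsum_le hα1 ha1 hsb hcoef (Nat.le_add_left 1 k)
  have hβ₀ : 0 ≤ β := hβ ▸ norm_nonneg _
  have hβ₁ : 0 ≤ 1 - β ^ 2 := (norm_nonneg _).trans (hcj 1 one_ne_zero)
  have hk : (0 : ℝ) < k + 1 := by positivity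
  have hkα : (k : ℝ) + 1 - α ≠ 0 := by linarith [(k.cast_nonneg : (0 : ℝ) ≤ k)]
  have hkδ : ((k : ℝ) + 1) ^ δ ≠ 0 := (Real.rpow_pos_of_pos hk δ).ne'
  rw [Nat.add_sub_cancel]
  push_cast at hak ⊢
  refine le_of_mul_le_mul_left ?_ hk
  calc ((k : ℝ) + 1) * ‖b (k + 1)‖
      ≤ ((k : ℝ) + 1) * ‖a (k + 1)‖ * β + (1 - β ^ 2) * ∑ i ∈ Icc 1 k, (i : ℝ) * ‖a i‖ :=
        hc₀ ▸ succ_mul_norm_le_of_eq_sum_mul hcoeff hcj k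
    _ ≤ ((k : ℝ) + 1) * ((1 - α) / (((k : ℝ) + 1) ^ δ * ((k : ℝ) + 1 - α))) * β +
          (1 - β ^ 2) * ((1 - α) * ∑ i ∈ Icc 1 k, (i : ℝ) ^ (1 - δ) / ((i : ℝ) - α)) := by
        gcongr
        exact sum_natCast_mul_norm_coeff_le hα1 ha1 hsb hcoef k
    _ = _ := by field_simp; ring

theorem bn_bound
    (α β δ : ℝ) (hα0 : 0 ≤ α) (hα1 : α < 1) (hβ0 : 0 ≤ β) (hβ1 : β < 1)
    (hδ : 0 ≤ δ)
    (h g w : ℂ → ℂ) (a b : ℕ → ℂ)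
    (ha0 : a 0 = 0) (ha1 : a 1 = 1) (hb0 : b 0 = 0)
    (hreph : ∀ z ∈ ball (0 : ℂ) 1, HasSum (fun n : ℕ => a n * z ^ n) (h z))
    (hrepg : ∀ z ∈ ball (0 : ℂ) 1, HasSum (fun n : ℕ => b n * z ^ n) (g z))
    (hsb : Summable fun n : ℕ =>
      ((n : ℝ) + 2) ^ δ * (((n : ℝ) + 2 - α) / (1 - α)) * ‖a (n + 2)‖)
    (hcoef : ∑' n : ℕ,
      ((n : ℝ) + 2) ^ δ * (((n : ℝ) + 2 - α) / (1 - α)) * ‖a (n + 2)‖ ≤ 1)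
    (hw : DifferentiableOn ℂ w (ball (0 : ℂ) 1))
    (hwlt : ∀ z ∈ ball (0 : ℂ) 1, ‖w z‖ < 1)
    (hdil : ∀ z ∈ ball (0 : ℂ) 1, deriv g z = w z * deriv h z)
    (hβ : ‖b 1‖ = β) :
    ∀ n : ℕ, 3 ≤ n →
      ‖b n‖ ≤ (1 - α) * (1 - β ^ 2) / (n : ℝ) *
          (∑ k ∈ Finset.Icc 1 (n - 1), (k : ℝ) ^ (1 - δ) / ((k : ℝ) - α)) +
        (1 - α) * β / ((n : ℝ) ^ δ * ((n : ℝ) - α)) :=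
  bn_bound_general α β δ hα1 h g w a b ha1 hreph hrepg hsb hcoef hw hwlt hdil hβ
end

section
/- Let f = h + ḡ ∈ S_H^δ[α, β] with δ ≥ 0. Then for z = re^{iθ} ∈ 𝔻, |f(z)| ≤ r + r²(1-α)/(2^δ(2-α)) + ∫₀^r ((β+ξ)/(1+βξ))·(1 + (1-α)ξ/((2-α)2^{δ-1})) dξ. -/
/-!
Since `h 0 = g 0 = 0`, `‖f z‖ ≤ ‖h z‖ + ‖g z‖` and each term is at most the integral, along the
radius `[0, z]`, of a bound for its derivative. Comparing coefficients with the weights of the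
hypothesis gives `∑_{n ≥ 2} n ‖aₙ‖ ≤ K := (1 - α) / ((2 - α) 2^(δ-1))`, hence
`‖h'(ξ)‖ ≤ 1 + K ‖ξ‖`, whose radial integral is `r + r² (1 - α) / (2^δ (2 - α))`. By the
Schwarz–Pick lemma `‖w ξ‖ ≤ (β + ‖ξ‖) / (1 + β ‖ξ‖)`, and `g' = w h'` bounds `‖g'‖` by the
integrand of the statement.
-/

open Complex Metric MeasureTheory Set
open scoped ComplexConjugate

theorem le_div_of_mul_sub_mul_sub_nonpos {β t s : ℝ} (ht : 0 ≤ t) (hβs : β * s ≤ 1)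
    (hβt : 0 < 1 + β * t)
    (h : ((1 + β * t) * s - (β + t)) * ((1 - β * t) * s - (β - t)) ≤ 0) :
    s ≤ (β + t) / (1 + β * t) := by
  rw [le_div_iff₀ hβt]
  by_contra! hlt
  have hpos : 0 < (1 + β * t) * s - (β + t) := by linarith
  have hgap : (1 + β * t) * s - (β + t) ≤ (1 - β * t) * s - (β - t) := by nlinarith
  nlinarith [mul_pos hpos (hpos.trans_le hgap)]

theorem normSq_sub_eq (u c : ℂ) :
    normSq (u - c) = normSq u - 2 * (conj c * u).re + normSq c := by
  simp only [normSq_apply, mul_re, conj_re, conj_im, sub_re, sub_im]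
  ring

theorem normSq_one_sub_conj_mul_eq (u c : ℂ) :
    normSq (1 - conj c * u) = 1 - 2 * (conj c * u).re + normSq c * normSq u := by
  simp only [normSq_apply, mul_re, mul_im, conj_re, conj_im, sub_re, sub_im, one_re, one_im]
  ring

theorem norm_sub_lt_norm_one_sub_conj_mul {u c : ℂ} (hu : ‖u‖ < 1) (hc : ‖c‖ < 1) :
    ‖u - c‖ < ‖1 - conj c * u‖ := by
  rw [← sq_lt_sq₀ (norm_nonneg _) (norm_nonneg _), Complex.sq_norm, Complex.sq_norm,
    normSq_sub_eq, normSq_one_sub_conj_mul_eq, ← Complex.sq_norm, ← Complex.sq_norm]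
  have := norm_nonneg u
  have := norm_nonneg c
  nlinarith [mul_pos (by nlinarith : 0 < 1 - ‖u‖ ^ 2) (by nlinarith : 0 < 1 - ‖c‖ ^ 2)]


theorem norm_le_of_norm_sub_le_mul_norm_one_sub_conj_mul {u c : ℂ} {t : ℝ} (ht0 : 0 ≤ t)
    (ht1 : t ≤ 1) (hcu : ‖c‖ * ‖u‖ ≤ 1) (h : ‖u - c‖ ≤ t * ‖1 - conj c * u‖) :
    ‖u‖ ≤ (‖c‖ + t) / (1 + ‖c‖ * t) := by
  have hsq : normSq (u - c) ≤ t ^ 2 * normSq (1 - conj c * u) := by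
    rw [← Complex.sq_norm, ← Complex.sq_norm, ← mul_pow]
    exact pow_le_pow_left₀ (norm_nonneg _) h 2
  rw [normSq_sub_eq, normSq_one_sub_conj_mul_eq, ← Complex.sq_norm, ← Complex.sq_norm] at hsq
  have hre : (conj c * u).re ≤ ‖c‖ * ‖u‖ := by
    simpa only [norm_mul, RCLike.norm_conj] using re_le_norm (conj c * u)
  have hc := norm_nonneg c
  -- `hsq` is a quadratic inequality in `‖u‖` whose roots are `(‖c‖ ± t) / (1 ± ‖c‖ t)`.
  apply le_div_of_mul_sub_mul_sub_nonpos ht0 hcu (by positivity)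
  nlinarith [mul_le_mul_of_nonneg_left hre (by nlinarith : 0 ≤ 1 - t ^ 2)]

theorem norm_le_div_of_mapsTo_ball_one {w : ℂ → ℂ} (hw : DifferentiableOn ℂ w (ball 0 1))
    (hmaps : MapsTo w (ball 0 1) (ball 0 1)) {z : ℂ} (hz : z ∈ ball (0 : ℂ) 1) :
    ‖w z‖ ≤ (‖w 0‖ + ‖z‖) / (1 + ‖w 0‖ * ‖z‖) := by
  have hnorm : ∀ ξ ∈ ball (0 : ℂ) 1, ‖w ξ‖ < 1 := fun ξ hξ => mem_ball_zero_iff.1 (hmaps hξ)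
  have hw0 : ‖w 0‖ < 1 := hnorm 0 (mem_ball_self one_pos)
  have hlt : ∀ ξ ∈ ball (0 : ℂ) 1, ‖w ξ - w 0‖ < ‖1 - conj (w 0) * w ξ‖ := fun ξ hξ =>
    norm_sub_lt_norm_one_sub_conj_mul (hnorm ξ hξ) hw0
  have hden : ∀ ξ ∈ ball (0 : ℂ) 1, 1 - conj (w 0) * w ξ ≠ 0 := fun ξ hξ =>
    norm_pos_iff.1 ((norm_nonneg _).trans_lt (hlt ξ hξ))
  -- `φ` is `w` followed by the disc automorphism sending `w 0` to `0`.
  set φ : ℂ → ℂ := fun ξ => (w ξ - w 0) / (1 - conj (w 0) * w ξ)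
  have hφ : DifferentiableOn ℂ φ (ball 0 1) :=
    (hw.sub_const _).div ((hw.const_mul _).const_sub _) hden
  have hφmaps : MapsTo φ (ball 0 1) (closedBall 0 1) := fun ξ hξ => by
    rw [mem_closedBall_zero_iff, norm_div, div_le_one ((norm_nonneg _).trans_lt (hlt ξ hξ))]
    exact (hlt ξ hξ).le
  have hschwarz : ‖φ z‖ ≤ ‖z‖ :=
    Complex.norm_le_norm_of_mapsTo_ball hφ hφmaps (by simp [φ]) (mem_ball_zero_iff.1 hz)
  rw [norm_div, div_le_iff₀ (norm_pos_iff.2 (hden z hz))] at hschwarz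
  exact norm_le_of_norm_sub_le_mul_norm_one_sub_conj_mul (norm_nonneg z)
    (mem_ball_zero_iff.1 hz).le (by nlinarith [hnorm z hz, norm_nonneg (w 0)]) hschwarz

theorem norm_deriv_le_of_deriv_eq_mul {g h w : ℂ → ℂ} {ψ : ℝ → ℝ}
    (hw : DifferentiableOn ℂ w (ball 0 1)) (hmaps : MapsTo w (ball 0 1) (ball 0 1))
    (hdil : ∀ z ∈ ball (0 : ℂ) 1, deriv g z = w z * deriv h z)
    (hh : ∀ ξ ∈ ball (0 : ℂ) 1, ‖deriv h ξ‖ ≤ ψ ‖ξ‖) {ξ : ℂ} (hξ : ξ ∈ ball (0 : ℂ) 1) :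
    ‖deriv g ξ‖ ≤ (‖w 0‖ + ‖ξ‖) / (1 + ‖w 0‖ * ‖ξ‖) * ψ ‖ξ‖ := by
  rw [hdil ξ hξ, norm_mul]
  exact mul_le_mul (norm_le_div_of_mapsTo_ball_one hw hmaps hξ) (hh ξ hξ) (norm_nonneg _)
    (by positivity)

theorem add_two_le_mul_weight {α δ : ℝ} (hα0 : 0 ≤ α) (hα1 : α < 1) (hδ : 0 ≤ δ) (n : ℕ) :
    (n : ℝ) + 2 ≤ (1 - α) / ((2 - α) * 2 ^ (δ - 1)) *
      (((n : ℝ) + 2) ^ δ * (((n : ℝ) + 2 - α) / (1 - α))) := by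
  have h2δ : (2 : ℝ) ^ δ ≤ ((n : ℝ) + 2) ^ δ := by gcongr; linarith [n.cast_nonneg (α := ℝ)]
  have hlin : ((n : ℝ) + 2) * (2 - α) ≤ 2 * ((n : ℝ) + 2 - α) := by
    nlinarith [n.cast_nonneg (α := ℝ)]
  have hα2 : 0 < 2 - α := by linarith
  have hrhs : (1 - α) / ((2 - α) * 2 ^ (δ - 1)) *
      (((n : ℝ) + 2) ^ δ * (((n : ℝ) + 2 - α) / (1 - α))) =
      2 * (((n : ℝ) + 2) ^ δ * ((n : ℝ) + 2 - α)) / ((2 - α) * 2 ^ δ) := by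
    rw [Real.rpow_sub_one two_ne_zero]
    field_simp [(by linarith : (1 - α) ≠ 0)]
  rw [hrhs, le_div_iff₀ (by positivity)]
  calc ((n : ℝ) + 2) * ((2 - α) * 2 ^ δ) ≤ 2 * ((n : ℝ) + 2 - α) * 2 ^ δ := by
        rw [← mul_assoc]; gcongr
    _ ≤ 2 * ((n : ℝ) + 2 - α) * ((n : ℝ) + 2) ^ δ := by
        gcongr; nlinarith [n.cast_nonneg (α := ℝ)]
    _ = 2 * (((n : ℝ) + 2) ^ δ * ((n : ℝ) + 2 - α)) := by ring

theorem summable_and_tsum_add_two_mul_norm_le {α δ : ℝ} (hα0 : 0 ≤ α) (hα1 : α < 1)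
    (hδ : 0 ≤ δ) {a : ℕ → ℂ}
    (hsb : Summable fun n : ℕ =>
      ((n : ℝ) + 2) ^ δ * (((n : ℝ) + 2 - α) / (1 - α)) * ‖a (n + 2)‖)
    (hcoef : ∑' n : ℕ,
      ((n : ℝ) + 2) ^ δ * (((n : ℝ) + 2 - α) / (1 - α)) * ‖a (n + 2)‖ ≤ 1) :
    (Summable fun n : ℕ => ((n : ℝ) + 2) * ‖a (n + 2)‖) ∧
      ∑' n : ℕ, ((n : ℝ) + 2) * ‖a (n + 2)‖ ≤ (1 - α) / ((2 - α) * 2 ^ (δ - 1)) := by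
  set K := (1 - α) / ((2 - α) * (2 : ℝ) ^ (δ - 1))
  have hα2 : 0 < 2 - α := by linarith
  have hK : 0 ≤ K := div_nonneg (by linarith) (by positivity)
  have hle : ∀ n : ℕ, ((n : ℝ) + 2) * ‖a (n + 2)‖ ≤
      K * (((n : ℝ) + 2) ^ δ * (((n : ℝ) + 2 - α) / (1 - α)) * ‖a (n + 2)‖) := fun n => by
    rw [← mul_assoc]
    exact mul_le_mul_of_nonneg_right (add_two_le_mul_weight hα0 hα1 hδ n) (norm_nonneg _)
  have hs : Summable fun n : ℕ => ((n : ℝ) + 2) * ‖a (n + 2)‖ :=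
    (hsb.mul_left K).of_nonneg_of_le (fun n => by positivity) hle
  refine ⟨hs, ?_⟩
  calc ∑' n : ℕ, ((n : ℝ) + 2) * ‖a (n + 2)‖
      ≤ K * ∑' n : ℕ, ((n : ℝ) + 2) ^ δ * (((n : ℝ) + 2 - α) / (1 - α)) * ‖a (n + 2)‖ := by
        rw [← tsum_mul_left]; exact hs.tsum_le_tsum hle (hsb.mul_left K)
    _ ≤ K := mul_le_of_le_one_right hK hcoef

theorem hasDerivAt_tsum_mul_pow {a : ℕ → ℂ} (ha : Summable fun n : ℕ => (n : ℝ) * ‖a n‖)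
    {ξ : ℂ} (hξ : ξ ∈ ball (0 : ℂ) 1) :
    HasDerivAt (fun z => ∑' n, a n * z ^ n) (∑' n, a n * (n * ξ ^ (n - 1))) ξ := by
  refine hasDerivAt_tsum_of_isPreconnected ha isOpen_ball (convex_ball _ _).isPreconnected
    (fun n y _ => (hasDerivAt_pow n y).const_mul (a n)) (fun n y hy => ?_)
    (mem_ball_self one_pos) ?_ hξ
  · rw [norm_mul, norm_mul, norm_pow, norm_natCast]
    calc ‖a n‖ * (n * ‖y‖ ^ (n - 1)) ≤ ‖a n‖ * (n * 1) := by
          gcongr; exact pow_le_one₀ (norm_nonneg y) (mem_ball_zero_iff.1 hy).le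
      _ = n * ‖a n‖ := by ring
  · exact (hasSum_single 0 fun n hn => by simp [hn]).summable

theorem hasDerivAt_of_hasSum_mul_pow {a : ℕ → ℂ} {h : ℂ → ℂ}
    (hreph : ∀ z ∈ ball (0 : ℂ) 1, HasSum (fun n : ℕ => a n * z ^ n) (h z))
    (hs : Summable fun n : ℕ => ((n : ℝ) + 2) * ‖a (n + 2)‖) {ξ : ℂ} (hξ : ξ ∈ ball (0 : ℂ) 1) :
    HasDerivAt h (∑' n, a n * (n * ξ ^ (n - 1))) ξ := by
  have hs' : Summable fun n : ℕ => (n : ℝ) * ‖a n‖ :=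
    (summable_nat_add_iff 2).1 (by simpa only [Nat.cast_add, Nat.cast_ofNat] using hs)
  refine (hasDerivAt_tsum_mul_pow hs' hξ).congr_of_eventuallyEq ?_
  filter_upwards [isOpen_ball.mem_nhds hξ] with y hy using (hreph y hy).tsum_eq.symm

theorem norm_tsum_mul_deriv_pow_le {a : ℕ → ℂ}
    (hs : Summable fun n : ℕ => ((n : ℝ) + 2) * ‖a (n + 2)‖) {ξ : ℂ} (hξ : ‖ξ‖ ≤ 1) :
    ‖∑' n, a n * (n * ξ ^ (n - 1))‖ ≤ ‖a 1‖ + (∑' n : ℕ, ((n : ℝ) + 2) * ‖a (n + 2)‖) * ‖ξ‖ := by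
  set f : ℕ → ℂ := fun n => a n * (n * ξ ^ (n - 1))
  have hbound : ∀ n : ℕ, ‖f (n + 2)‖ ≤ ((n : ℝ) + 2) * ‖a (n + 2)‖ * ‖ξ‖ := fun n => by
    simp only [f, norm_mul, norm_pow, norm_natCast]
    calc ‖a (n + 2)‖ * (((n + 2 : ℕ) : ℝ) * ‖ξ‖ ^ (n + 1))
        ≤ ‖a (n + 2)‖ * (((n + 2 : ℕ) : ℝ) * ‖ξ‖) := by
          gcongr; exact pow_le_of_le_one (norm_nonneg ξ) hξ n.succ_ne_zero
      _ = ((n : ℝ) + 2) * ‖a (n + 2)‖ * ‖ξ‖ := by push_cast; ring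
  have hsplit : ∑' n, f n = a 1 + ∑' n, f (n + 2) := by
    rw [← (Summable.of_norm_bounded (hs.mul_right ‖ξ‖) hbound).sum_add_tsum_nat_add']
    simp [f, Finset.sum_range_succ]
  rw [hsplit]
  calc ‖a 1 + ∑' n, f (n + 2)‖ ≤ ‖a 1‖ + ‖∑' n, f (n + 2)‖ := norm_add_le _ _
    _ ≤ ‖a 1‖ + (∑' n : ℕ, ((n : ℝ) + 2) * ‖a (n + 2)‖) * ‖ξ‖ := by
      gcongr; exact tsum_of_norm_bounded (hs.hasSum.mul_right ‖ξ‖) hbound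

theorem norm_deriv_le_of_hasSum_mul_pow {a : ℕ → ℂ} {h : ℂ → ℂ} {M : ℝ}
    (hreph : ∀ z ∈ ball (0 : ℂ) 1, HasSum (fun n : ℕ => a n * z ^ n) (h z)) (ha1 : a 1 = 1)
    (hs : Summable fun n : ℕ => ((n : ℝ) + 2) * ‖a (n + 2)‖)
    (hM : ∑' n : ℕ, ((n : ℝ) + 2) * ‖a (n + 2)‖ ≤ M) {ξ : ℂ} (hξ : ξ ∈ ball (0 : ℂ) 1) :
    ‖deriv h ξ‖ ≤ 1 + M * ‖ξ‖ := by
  rw [(hasDerivAt_of_hasSum_mul_pow hreph hs hξ).deriv]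
  refine (norm_tsum_mul_deriv_pow_le hs (mem_ball_zero_iff.1 hξ).le).trans ?_
  rw [ha1, norm_one]
  gcongr

theorem norm_sub_le_integral_of_norm_deriv_le {E : Type*} [NormedAddCommGroup E]
    [NormedSpace ℂ E] [CompleteSpace E] {F : ℂ → E} {φ : ℝ → ℝ} {R : ℝ} {z : ℂ}
    (hF : DifferentiableOn ℂ F (ball 0 R)) (hz : z ∈ ball 0 R)
    (hφ : ContinuousOn φ (Icc 0 ‖z‖)) (hbound : ∀ ξ ∈ ball (0 : ℂ) R, ‖deriv F ξ‖ ≤ φ ‖ξ‖) :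
    ‖F z - F 0‖ ≤ ∫ x in (0 : ℝ)..‖z‖, φ x := by
  have hseg : ∀ t ∈ Icc (0 : ℝ) 1, t • z ∈ ball (0 : ℂ) R := fun t ht =>
    (convex_ball 0 R).smul_mem_of_zero_mem (mem_ball_self ((norm_nonneg z).trans_lt
      (mem_ball_zero_iff.1 hz))) hz ht
  have hderiv : ∀ t ∈ uIcc (0 : ℝ) 1,
      HasDerivAt (fun s : ℝ => F (s • z)) (z • deriv F (t • z)) t := fun t ht => by
    rw [uIcc_of_le zero_le_one] at ht
    have hF' : HasDerivAt F (deriv F (t • z)) (t • z) :=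
      (hF.differentiableAt (isOpen_ball.mem_nhds (hseg t ht))).hasDerivAt
    simpa [Function.comp_def] using hF'.scomp t ((hasDerivAt_id t).smul_const z)
  have hcont : ContinuousOn (fun t : ℝ => z • deriv F (t • z)) (uIcc 0 1) := by
    rw [uIcc_of_le zero_le_one]
    exact continuousOn_const.smul (((hF.analyticOnNhd isOpen_ball).deriv.continuousOn).comp
      (by fun_prop) hseg)
  have hφcont : ContinuousOn (fun t : ℝ => ‖z‖ * φ (‖z‖ * t)) (uIcc 0 1) := by
    rw [uIcc_of_le zero_le_one]
    refine continuousOn_const.mul (hφ.comp (by fun_prop) fun t ht => ?_)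
    exact ⟨by have := ht.1; positivity, mul_le_of_le_one_right (norm_nonneg z) ht.2⟩
  have hFTC := intervalIntegral.integral_eq_sub_of_hasDerivAt hderiv hcont.intervalIntegrable
  rw [one_smul, zero_smul] at hFTC
  rw [← hFTC]
  calc ‖∫ t in (0 : ℝ)..1, z • deriv F (t • z)‖
      ≤ ∫ t in (0 : ℝ)..1, ‖z‖ * φ (‖z‖ * t) := by
        refine intervalIntegral.norm_integral_le_of_norm_le zero_le_one
          (Filter.Eventually.of_forall fun t ht => ?_) hφcont.intervalIntegrable
        have ht' : t ∈ Icc (0 : ℝ) 1 := Ioc_subset_Icc_self ht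
        rw [norm_smul]
        gcongr
        simpa [norm_smul, abs_of_nonneg ht'.1, mul_comm] using hbound _ (hseg t ht')
    _ = ∫ x in (0 : ℝ)..‖z‖, φ x := by
        rw [intervalIntegral.integral_const_mul, ← smul_eq_mul,
          intervalIntegral.smul_integral_comp_mul_left, mul_zero, mul_one]

theorem integral_one_add_mul (K r : ℝ) : ∫ x in (0 : ℝ)..r, (1 + K * x) = r + K * r ^ 2 / 2 := by
  rw [intervalIntegral.integral_add intervalIntegrable_const
    ((continuous_const_mul K).intervalIntegrable _ _), intervalIntegral.integral_const_mul,
    integral_id]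
  simp
  ring

theorem f_growth_upper_general
    (α β δ : ℝ) (hα0 : 0 ≤ α) (hα1 : α < 1)
    (hδ : 0 ≤ δ)
    (h g w : ℂ → ℂ) (a : ℕ → ℂ)
    (ha0 : a 0 = 0) (ha1 : a 1 = 1)
    (hreph : ∀ z ∈ ball (0 : ℂ) 1, HasSum (fun n : ℕ => a n * z ^ n) (h z))
    (hsb : Summable fun n : ℕ =>
      ((n : ℝ) + 2) ^ δ * (((n : ℝ) + 2 - α) / (1 - α)) * ‖a (n + 2)‖)
    (hcoef : ∑' n : ℕ,
      ((n : ℝ) + 2) ^ δ * (((n : ℝ) + 2 - α) / (1 - α)) * ‖a (n + 2)‖ ≤ 1)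
    (hg : DifferentiableOn ℂ g (ball (0 : ℂ) 1)) (hg0 : g 0 = 0)
    (hw : DifferentiableOn ℂ w (ball (0 : ℂ) 1))
    (hwlt : ∀ z ∈ ball (0 : ℂ) 1, ‖w z‖ < 1)
    (hw0 : ‖w 0‖ = β)
    (hdil : ∀ z ∈ ball (0 : ℂ) 1, deriv g z = w z * deriv h z)
    (f : ℂ → ℂ)
    (hf : ∀ z ∈ ball (0 : ℂ) 1, f z = h z + (starRingEnd ℂ) (g z)) :
    ∀ z ∈ ball (0 : ℂ) 1,
      ‖f z‖ ≤ ‖z‖ + ‖z‖ ^ 2 * (1 - α) / ((2 : ℝ) ^ δ * (2 - α)) +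
        ∫ ξ in Set.Ioo (0 : ℝ) ‖z‖,
          ((β + ξ) / (1 + β * ξ)) *
            (1 + (1 - α) * ξ / ((2 - α) * (2 : ℝ) ^ (δ - 1))) := by
  intro z hz
  set K := (1 - α) / ((2 - α) * (2 : ℝ) ^ (δ - 1))
  obtain ⟨hs, hsK⟩ := summable_and_tsum_add_two_mul_norm_le hα0 hα1 hδ hsb hcoef
  have hh : DifferentiableOn ℂ h (ball 0 1) := fun ξ hξ =>
    (hasDerivAt_of_hasSum_mul_pow hreph hs hξ).differentiableAt.differentiableWithinAt
  have hh' : ∀ ξ ∈ ball (0 : ℂ) 1, ‖deriv h ξ‖ ≤ 1 + K * ‖ξ‖ := fun ξ hξ =>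
    norm_deriv_le_of_hasSum_mul_pow hreph ha1 hs hsK hξ
  have hg' : ∀ ξ ∈ ball (0 : ℂ) 1, ‖deriv g ξ‖ ≤ (β + ‖ξ‖) / (1 + β * ‖ξ‖) * (1 + K * ‖ξ‖) :=
    fun ξ hξ => hw0 ▸ norm_deriv_le_of_deriv_eq_mul (ψ := fun x => 1 + K * x) hw
      (fun ζ hζ => mem_ball_zero_iff.2 (hwlt ζ hζ)) hdil hh' hξ
  have hh0 : h 0 = 0 := (hreph 0 (mem_ball_self one_pos)).unique <| by
    simpa [ha0] using hasSum_single (f := fun n : ℕ => a n * 0 ^ n) 0 fun n hn => by simp [hn]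
  have hβ : 0 ≤ β := hw0 ▸ norm_nonneg _
  have hhz := norm_sub_le_integral_of_norm_deriv_le (φ := fun x => 1 + K * x) hh hz
    (by fun_prop) hh'
  have hgz := norm_sub_le_integral_of_norm_deriv_le
    (φ := fun x => (β + x) / (1 + β * x) * (1 + K * x)) hg hz
    (.mul (.div (by fun_prop) (by fun_prop) fun x hx => by nlinarith [mul_nonneg hβ hx.1])
      (by fun_prop)) hg'
  rw [hh0, sub_zero, integral_one_add_mul] at hhz
  rw [hg0, sub_zero, intervalIntegral.integral_of_le (norm_nonneg z),
    integral_Ioc_eq_integral_Ioo] at hgz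
  calc ‖f z‖ ≤ ‖h z‖ + ‖g z‖ := by
        rw [hf z hz, ← RCLike.norm_conj (g z)]; exact norm_add_le _ _
    _ ≤ _ := add_le_add hhz hgz
    _ = _ := by
      congr 2
      · simp only [K, Real.rpow_sub_one two_ne_zero]
        field_simp
      · ext x
        ring

theorem f_growth_upper
    (α β δ : ℝ) (hα0 : 0 ≤ α) (hα1 : α < 1) (hβ0 : 0 ≤ β) (hβ1 : β < 1)
    (hδ : 0 ≤ δ)
    (h g w : ℂ → ℂ) (a : ℕ → ℂ)
    (ha0 : a 0 = 0) (ha1 : a 1 = 1)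
    (hreph : ∀ z ∈ ball (0 : ℂ) 1, HasSum (fun n : ℕ => a n * z ^ n) (h z))
    (hsb : Summable fun n : ℕ =>
      ((n : ℝ) + 2) ^ δ * (((n : ℝ) + 2 - α) / (1 - α)) * ‖a (n + 2)‖)
    (hcoef : ∑' n : ℕ,
      ((n : ℝ) + 2) ^ δ * (((n : ℝ) + 2 - α) / (1 - α)) * ‖a (n + 2)‖ ≤ 1)
    (hg : DifferentiableOn ℂ g (ball (0 : ℂ) 1)) (hg0 : g 0 = 0)
    (hw : DifferentiableOn ℂ w (ball (0 : ℂ) 1))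
    (hwlt : ∀ z ∈ ball (0 : ℂ) 1, ‖w z‖ < 1)
    (hw0 : ‖w 0‖ = β)
    (hdil : ∀ z ∈ ball (0 : ℂ) 1, deriv g z = w z * deriv h z)
    (f : ℂ → ℂ)
    (hf : ∀ z ∈ ball (0 : ℂ) 1, f z = h z + (starRingEnd ℂ) (g z)) :
    ∀ z ∈ ball (0 : ℂ) 1,
      ‖f z‖ ≤ ‖z‖ + ‖z‖ ^ 2 * (1 - α) / ((2 : ℝ) ^ δ * (2 - α)) +
        ∫ ξ in Set.Ioo (0 : ℝ) ‖z‖,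
          ((β + ξ) / (1 + β * ξ)) *
            (1 + (1 - α) * ξ / ((2 - α) * (2 : ℝ) ^ (δ - 1))) :=
  f_growth_upper_general α β δ hα0 hα1 hδ h g w a ha0 ha1 hreph hsb hcoef hg hg0 hw hwlt hw0 hdil f
    hf
end

section
/- Let δ ≥ 0, α ∈ [0,1), β ∈ (0,1). Define H(r) = 2^{δ-1}(2-α)(1-β) + (1-α) - 2(2^{δ-1}(2-α) - (1-α))r - (2^{δ-1}(2-α)(3+β) + (1-α)(3-β))r² - (2^δ(2-α)β + (1-α)(4+2β))r³ - 3(1-α)βr⁴. Then H(0) > 0, H(1) < 0, and H has exactly one root in (0,1). -/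
theorem quartic_root
    (δ α β : ℝ) (hδ : 0 ≤ δ) (hα0 : 0 ≤ α) (hα1 : α < 1)
    (hβ0 : 0 < β) (hβ1 : β < 1)
    (H : ℝ → ℝ)
    (hH : ∀ r : ℝ, H r =
      (2 : ℝ) ^ (δ - 1) * (2 - α) * (1 - β) + (1 - α) -
        2 * ((2 : ℝ) ^ (δ - 1) * (2 - α) - (1 - α)) * r -
        ((2 : ℝ) ^ (δ - 1) * (2 - α) * (3 + β) + (1 - α) * (3 - β)) * r ^ 2 -
        ((2 : ℝ) ^ δ * (2 - α) * β + (1 - α) * (4 + 2 * β)) * r ^ 3 -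
        3 * (1 - α) * β * r ^ 4) :
    H 0 > 0 ∧ H 1 < 0 ∧ ∃! r : ℝ, r ∈ Set.Ioo (0 : ℝ) 1 ∧ H r = 0 := by
  set c : ℝ := (2 : ℝ) ^ (δ - 1) with hc
  have hc0 : 0 < c := Real.rpow_pos_of_pos (by norm_num) _
  have hchalf : (1/2 : ℝ) ≤ c := by
    have : (2:ℝ) ^ (-1 : ℝ) ≤ (2:ℝ) ^ (δ - 1) :=
      Real.rpow_le_rpow_of_exponent_le (by norm_num) (by linarith)
    rw [Real.rpow_neg_one] at this; linarith
  have h2δ : (2:ℝ) ^ δ = 2 * c := by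
    rw [hc, Real.rpow_sub (by norm_num), Real.rpow_one]; ring
  set A : ℝ := c * (2 - α) with hA
  set B : ℝ := 1 - α with hB
  have hApos : 0 < A := mul_pos hc0 (by linarith)
  have hBpos : 0 < B := by simp [hB]; linarith
  have hAB : B ≤ A := by
    have : (1/2 : ℝ) * (2 - α) ≤ c * (2 - α) :=
      mul_le_mul_of_nonneg_right hchalf (by linarith)
    nlinarith
  have hH' : ∀ r : ℝ, H r =
      A * (1 - β) + B - 2 * (A - B) * r - (A * (3 + β) + B * (3 - β)) * r ^ 2
        - (2 * A * β + B * (4 + 2 * β)) * r ^ 3 - 3 * B * β * r ^ 4 := by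
    intro r; rw [hH r, h2δ]; ring
  have h0 : H 0 > 0 := by
    rw [hH' 0]; nlinarith
  have h1 : H 1 < 0 := by
    rw [hH' 1]; nlinarith
  have hmono : StrictAntiOn H (Set.Icc (0:ℝ) 1) := by
    intro r hr s hs hrs
    rw [hH' r, hH' s]
    have hr0 : 0 ≤ r := hr.1
    have hs1 : s ≤ 1 := hs.2
    have h2 : r^2 < s^2 := by nlinarith
    have h3 : r^3 ≤ s^3 := by nlinarith
    have h4 : r^4 ≤ s^4 := by nlinarith
    nlinarith [mul_pos hApos hβ0, mul_pos hBpos hβ0,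
      mul_le_mul_of_nonneg_left h3 (le_of_lt (by positivity : (0:ℝ) < 2*A*β + B*(4+2*β))),
      mul_le_mul_of_nonneg_left h4 (le_of_lt (by positivity : (0:ℝ) < 3*B*β)),
      mul_lt_mul_of_pos_left h2 (by nlinarith : (0:ℝ) < A*(3+β) + B*(3-β)),
      mul_le_mul_of_nonneg_left (le_of_lt hrs) (by nlinarith : (0:ℝ) ≤ 2*(A-B))]
  have hcont : ContinuousOn H (Set.Icc (0:ℝ) 1) := by
    have : H = fun r => A * (1 - β) + B - 2 * (A - B) * r
        - (A * (3 + β) + B * (3 - β)) * r ^ 2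
        - (2 * A * β + B * (4 + 2 * β)) * r ^ 3 - 3 * B * β * r ^ 4 :=
      funext hH'
    rw [this]; fun_prop
  refine ⟨h0, h1, ?_⟩
  have hmem : (0:ℝ) ∈ Set.Ioo (H 1) (H 0) := ⟨h1, h0⟩
  have := intermediate_value_Ioo' (by norm_num : (0:ℝ) ≤ 1) hcont hmem
  obtain ⟨r, hr, hHr⟩ := this
  refine ⟨r, ⟨hr, hHr⟩, ?_⟩
  rintro s ⟨hs, hHs⟩
  by_contra hne
  rcases lt_or_gt_of_ne hne with h | h
  · have := hmono (Set.mem_Icc.mpr ⟨hs.1.le, hs.2.le⟩)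
      (Set.mem_Icc.mpr ⟨hr.1.le, hr.2.le⟩) h
    rw [hHs, hHr] at this; exact lt_irrefl 0 this
  · have := hmono (Set.mem_Icc.mpr ⟨hr.1.le, hr.2.le⟩)
      (Set.mem_Icc.mpr ⟨hs.1.le, hs.2.le⟩) h
    rw [hHs, hHr] at this; exact lt_irrefl 0 this
end
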